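/- Suppose f − 1 = λm and let χ be a multiplicative character of order m on F_q. Then H_{q,m} is a (q, f, λ)-difference set in F_q if and only if Σ_{t=1, t≠s}^{m−1} χ^t(−1) G_q(χ^t) G_q(χ^{s−t}) = (1 + χ^s(−1)) G_q(χ^s) for every s = 1, ..., m − 1. -/

import Mathlib

/-- `D` is a `(q, k, l)`-difference set in the additive group `F` (with `q = |F|`). -/
def IsDiffSet {F : Type*} [AddGroup F] (D : Set F) (k l : ℕ) : Prop :=
  D.ncard = k ∧
    ∀ a : F, a ≠ 0 → {x : F × F | x.1 ∈ D ∧ x.2 ∈ D ∧ x.1 - x.2 = a}.ncard = l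

/-- The set of nonzero `m`-th powers in `F`. -/
def Hset (F : Type*) [Field F] (m : ℕ) : Set F :=
  {x : F | x ≠ 0 ∧ ∃ y : F, y ^ m = x}

/-- The Gauss sum `G_q(χ) = ∑ α ∈ F_q, χ(α) ζ_p^{Tr(α)}`, where `Tr` is the trace map
from `F_q` to `F_p` and `ζ_p = e^{2πi/p}`. -/
noncomputable def Gsum (p : ℕ) (F : Type*) [Field F] [Fintype F] [Algebra (ZMod p) F]
    (χ : MulChar F ℂ) : ℂ :=
  ∑ α : F, χ α *
    Complex.exp (2 * Real.pi * Complex.I * ((Algebra.trace (ZMod p) F α).val : ℂ) / p)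

/-!
Let `ψ` be the additive character `α ↦ ζ_p ^ Tr α` and `S c = ∑_{x ∈ H} ψ (c x)` for `H = H_{q,m}`.
Fourier analysis on `(F, +)` shows that `H` is a `(q, f, λ)`-difference set iff `S c * S (-c)` is
constant on `F^*` (the constant is forced to be `f - λ` by `f (f - 1) = λ (q - 1)`).
Since `m 1_H = ∑_{t < m} χ^t` (Mathlib's trivial character vanishes at `0`, so this holds on all
of `F` and `G(χ^0) = -1`), one gets `m S c = ∑_t χ^{-t}(c) G(χ^t)` and
`m² S c S (-c) = ∑_u χ^{-u}(c) C_u` with `C_u = ∑_t χ^t(-1) G(χ^t) G(χ^{u-t})`.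
By orthogonality of the powers of `χ` this is constant in `c` iff `C_u = 0` for `0 < u < m`, and
splitting off the terms `t = 0` and `t = u` turns `C_u = 0` into the stated identity.
-/

open Finset

section TraceChar

variable (p : ℕ) (F : Type*) [Field F] [Fintype F] [Algebra (ZMod p) F]

noncomputable def traceAddChar [NeZero p] : AddChar F ℂ :=
  ZMod.stdAddChar.compAddMonoidHom (Algebra.trace (ZMod p) F).toAddMonoidHom

theorem Gsum_eq_gaussSum [NeZero p] (χ : MulChar F ℂ) :
    Gsum p F χ = gaussSum χ (traceAddChar p F) := by
  refine sum_congr rfl fun α _ => ?_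
  simp [traceAddChar, ZMod.stdAddChar_apply, ZMod.toCircle_apply]

theorem isPrimitive_traceAddChar [Fact p.Prime] : (traceAddChar p F).IsPrimitive := by
  refine AddChar.IsPrimitive.of_ne_one fun h => ?_
  obtain ⟨a, ha⟩ := Algebra.trace_surjective (ZMod p) F 1
  have : ZMod.stdAddChar (1 : ZMod p) = ZMod.stdAddChar (0 : ZMod p) := by
    rw [AddChar.map_zero_eq_one, ← ha]
    exact DFunLike.congr_fun h a
  exact one_ne_zero (ZMod.injective_stdAddChar this)

end TraceChar

section DifferenceSet

variable {R : Type*}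

def diffCount [AddGroup R] [DecidableEq R] (D : Finset R) (a : R) : ℕ :=
  #{xy ∈ D ×ˢ D | xy.1 - xy.2 = a}

theorem isDiffSet_coe_iff [AddGroup R] [DecidableEq R] (D : Finset R) (k l : ℕ) :
    IsDiffSet (D : Set R) k l ↔ #D = k ∧ ∀ a ≠ 0, diffCount D a = l := by
  have hcount (a : R) :
      {x : R × R | x.1 ∈ (D : Set R) ∧ x.2 ∈ (D : Set R) ∧ x.1 - x.2 = a}.ncard =
        diffCount D a := by
    rw [diffCount, ← Set.ncard_coe_finset]
    congr 1
    ext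
    simp [and_assoc]
  simp only [IsDiffSet, Set.ncard_coe_finset, hcount]

theorem diffCount_zero [AddGroup R] [DecidableEq R] (D : Finset R) : diffCount D 0 = #D := by
  rw [diffCount, ← D.diag_card]
  congr 1
  ext
  simp only [mem_filter, mem_product, mem_diag, sub_eq_zero]
  aesop

variable [CommRing R] [Fintype R] [DecidableEq R] {ψ : AddChar R ℂ}

theorem AddChar.sum_mul_eq_ite (hψ : ψ.IsPrimitive) (b : R) :
    ∑ c, ψ (c * b) = if b = 0 then (Fintype.card R : ℂ) else 0 := by
  simpa using AddChar.sum_mulShift b hψ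

theorem sum_mul_sum_neg_eq_sum_diffCount (ψ : AddChar R ℂ) (D : Finset R) (c : R) :
    (∑ x ∈ D, ψ (c * x)) * ∑ x ∈ D, ψ (-c * x) = ∑ a, (diffCount D a : ℂ) * ψ (c * a) := by
  rw [sum_mul_sum, ← sum_product', ← sum_fiberwise (D ×ˢ D) (fun xy => xy.1 - xy.2)]
  refine sum_congr rfl fun a _ => ?_
  rw [diffCount, ← nsmul_eq_mul, ← sum_const]
  refine sum_congr rfl fun xy hxy => ?_
  rw [← (mem_filter.mp hxy).2, ← AddChar.map_add_eq_mul]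
  ring_nf

theorem sum_mul_sum_neg_mul_eq_card_mul_diffCount (hψ : ψ.IsPrimitive) (D : Finset R) (a : R) :
    ∑ c, (∑ x ∈ D, ψ (c * x)) * (∑ x ∈ D, ψ (-c * x)) * ψ (-(c * a)) =
      Fintype.card R * diffCount D a := by
  simp_rw [sum_mul_sum_neg_eq_sum_diffCount, sum_mul]
  rw [sum_comm]
  have horth (b : R) : ∑ c, (diffCount D b : ℂ) * ψ (c * b) * ψ (-(c * a)) =
      diffCount D b * if b - a = 0 then (Fintype.card R : ℂ) else 0 := by
    rw [← ψ.sum_mul_eq_ite hψ, mul_sum]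
    refine sum_congr rfl fun c _ => ?_
    rw [mul_assoc, ← AddChar.map_add_eq_mul]
    ring_nf
  simp only [horth, sub_eq_zero, mul_ite, mul_zero, sum_ite_eq', if_pos (mem_univ _)]
  ring

theorem card_mul_diffCount_eq_of_forall_eq (hψ : ψ.IsPrimitive) (D : Finset R) {K : ℂ}
    (hK : ∀ c ≠ 0, (∑ x ∈ D, ψ (c * x)) * ∑ x ∈ D, ψ (-c * x) = K) (b : R) :
    Fintype.card R * (diffCount D b : ℂ) =
      K * (if b = 0 then (Fintype.card R : ℂ) else 0) + (#D * #D - K) := by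
  have hT (c : R) : (∑ x ∈ D, ψ (c * x)) * (∑ x ∈ D, ψ (-c * x)) =
      K + if c = 0 then ((#D : ℂ) * #D - K) else 0 := by
    split_ifs with hc
    · simp [hc]
    · rw [hK c hc, add_zero]
  rw [← sum_mul_sum_neg_mul_eq_card_mul_diffCount hψ]
  simp_rw [hT, add_mul, sum_add_distrib, ← mul_sum, ite_mul, zero_mul, sum_ite_eq',
    if_pos (mem_univ _), zero_mul, neg_zero, AddChar.map_zero_eq_one, mul_one, ← mul_neg,
    ψ.sum_mul_eq_ite hψ, neg_eq_zero]

theorem forall_diffCount_eq_iff_exists_const (hψ : ψ.IsPrimitive) (D : Finset R) {l : ℕ}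
    (hkl : #D * #D + l = #D + l * Fintype.card R) :
    (∀ a ≠ 0, diffCount D a = l) ↔
      ∃ K : ℂ, ∀ c ≠ 0, (∑ x ∈ D, ψ (c * x)) * ∑ x ∈ D, ψ (-c * x) = K := by
  constructor
  · intro h
    refine ⟨#D - l, fun c hc => ?_⟩
    have hN (a : R) : (diffCount D a : ℂ) = l + if a = 0 then (#D - l : ℂ) else 0 := by
      split_ifs with ha
      · rw [ha, diffCount_zero]
        ring
      · rw [h a ha, add_zero]
    simp_rw [sum_mul_sum_neg_eq_sum_diffCount, hN, add_mul, sum_add_distrib, ← mul_sum, ite_mul,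
      zero_mul, sum_ite_eq', if_pos (mem_univ _), mul_zero, AddChar.map_zero_eq_one]
    simp_rw [mul_comm c, ψ.sum_mul_eq_ite hψ, if_neg hc]
    ring
  · rintro ⟨K, hK⟩ a ha
    have : Nontrivial R := nontrivial_of_ne a 0 ha
    have h0 := card_mul_diffCount_eq_of_forall_eq hψ D hK 0
    have ha' := card_mul_diffCount_eq_of_forall_eq hψ D hK a
    rw [diffCount_zero, if_pos rfl] at h0
    rw [if_neg ha] at ha'
    have hkl' : (#D : ℂ) * #D + l = #D + l * Fintype.card R := by exact_mod_cast hkl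
    have hq : (Fintype.card R : ℂ) * (Fintype.card R - 1) ≠ 0 := by
      have := Fintype.one_lt_card (α := R)
      apply mul_ne_zero (Nat.cast_ne_zero.mpr Fintype.card_ne_zero)
      rw [sub_ne_zero]
      exact_mod_cast this.ne'
    -- `h0` is Parseval's identity; with `hkl'` it forces `#D ^ 2 - K = q λ`.
    have : (Fintype.card R : ℂ) * (Fintype.card R - 1) * diffCount D a =
        Fintype.card R * (Fintype.card R - 1) * l := by
      linear_combination (↑(Fintype.card R) - 1) * ha' + h0 + ↑(Fintype.card R) * hkl'
    exact_mod_cast mul_left_cancel₀ hq this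

end DifferenceSet

theorem sum_range_orderOf_mul_pow {G M : Type*} [Group G] [AddCommMonoid M] (g : G) (k : ℕ)
    (φ : G → M) :
    ∑ t ∈ range (orderOf g), φ (g ^ k * g ^ t) = ∑ t ∈ range (orderOf g), φ (g ^ t) := by
  by_cases hg : IsOfFinOrder g
  · let _ : Fintype (Subgroup.zpowers g) := Fintype.ofEquiv _ (finEquivZPowers hg)
    have sum_eq (φ : G → M) :
        ∑ t ∈ range (orderOf g), φ (g ^ t) = ∑ y : Subgroup.zpowers g, φ y := by
      rw [← Fin.sum_univ_eq_sum_range (fun t => φ (g ^ t))]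
      exact Equiv.sum_comp (finEquivZPowers hg) (fun y => φ y)
    rw [sum_eq (fun x => φ (g ^ k * x)), sum_eq φ]
    exact Equiv.sum_comp (Equiv.mulLeft (⟨g ^ k, pow_mem (Subgroup.mem_zpowers g) k⟩ :
      Subgroup.zpowers g)) (fun y => φ y)
  · simp [orderOf_eq_zero hg]

section MulChar

variable {F : Type*} [Field F]

theorem MulChar.apply_eq_one_iff_exists_pow_eq [Finite F] {R : Type*} [CommMonoidWithZero R]
    (χ : MulChar F R) {x : F} (hx : x ≠ 0) : χ x = 1 ↔ ∃ y, y ^ orderOf χ = x := by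
  constructor
  · intro h
    obtain ⟨g, hg⟩ := IsCyclic.exists_generator (α := Fˣ)
    have hord : orderOf (χ g) = orderOf χ := by
      refine orderOf_eq_orderOf_iff.mpr fun n => ?_
      rw [MulChar.eq_iff hg (χ ^ n) 1, MulChar.pow_apply_coe, MulChar.one_apply_coe]
    obtain ⟨k, hk⟩ := mem_powers_iff_mem_zpowers.mpr (hg (Units.mk0 x hx))
    have hxk : (g : F) ^ k = x := by
      rw [← Units.val_pow_eq_pow_val]
      exact congrArg Units.val hk
    obtain ⟨j, rfl⟩ : orderOf χ ∣ k :=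
      hord ▸ orderOf_dvd_of_pow_eq_one (by rw [← map_pow, hxk, h])
    exact ⟨(g : F) ^ j, by rw [← pow_mul, mul_comm, hxk]⟩
  · rintro ⟨y, rfl⟩
    have hy : y ≠ 0 := by
      rintro rfl
      exact hx (zero_pow χ.orderOf_pos.ne')
    rw [map_pow, ← MulChar.pow_apply' χ χ.orderOf_pos.ne', pow_orderOf_eq_one,
      MulChar.one_apply hy.isUnit]

theorem MulChar.inv_apply_neg {R : Type*} [CommGroupWithZero R] (ξ : MulChar F R) (c : F) :
    ξ⁻¹ (-c) = ξ (-1) * ξ⁻¹ c := by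
  rw [MulChar.inv_apply', MulChar.inv_apply', inv_neg, neg_eq_neg_one_mul, map_mul]

variable [Fintype F]

theorem MulChar.sum_range_pow_apply_eq_ite [DecidableEq F] (χ : MulChar F ℂ) {D : Finset F}
    (hD : (D : Set F) = Hset F (orderOf χ)) (x : F) :
    ∑ t ∈ range (orderOf χ), (χ ^ t) x = if x ∈ D then (orderOf χ : ℂ) else 0 := by
  rcases eq_or_ne x 0 with rfl | hx
  · have : (0 : F) ∉ D := by
      rw [← mem_coe, hD]
      exact fun h => h.1 rfl
    simp [this]
  · have hpow (t : ℕ) : (χ ^ t) x = χ x ^ t := by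
      simpa using MulChar.pow_apply_coe χ t (Units.mk0 x hx)
    have hmem : x ∈ D ↔ χ x = 1 := by
      rw [← mem_coe, hD, χ.apply_eq_one_iff_exists_pow_eq hx]
      exact and_iff_right hx
    simp_rw [hpow]
    split_ifs with h
    · simp [hmem.mp h]
    · rw [geom_sum_eq (mt hmem.mpr h), ← hpow, pow_orderOf_eq_one, MulChar.one_apply hx.isUnit,
        sub_self, zero_div]

theorem MulChar.orderOf_mul_card_eq (χ : MulChar F ℂ) {D : Finset F}
    (hD : (D : Set F) = Hset F (orderOf χ)) : orderOf χ * #D = Fintype.card F - 1 := by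
  classical
  rw [← Fintype.card_units]
  have key : ((orderOf χ * #D : ℕ) : ℂ) = Fintype.card Fˣ :=
    calc ((orderOf χ * #D : ℕ) : ℂ) = ∑ x, ∑ t ∈ range (orderOf χ), (χ ^ t) x := by
          simp [χ.sum_range_pow_apply_eq_ite hD, mul_comm]
      _ = ∑ t ∈ range (orderOf χ), ∑ x, (χ ^ t) x := sum_comm
      _ = Fintype.card Fˣ := by
          rw [sum_eq_single_of_mem 0 (mem_range.mpr χ.orderOf_pos), pow_zero,
            MulChar.sum_one_eq_card_units]
          intro t ht ht0
          exact MulChar.sum_eq_zero_of_ne_one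
            (pow_ne_one_of_lt_orderOf ht0 (mem_range.mp ht))
  exact_mod_cast key

theorem orderOf_mul_sum_eq_sum_gaussSum (χ : MulChar F ℂ) (ψ : AddChar F ℂ) {D : Finset F}
    (hD : (D : Set F) = Hset F (orderOf χ)) {c : F} (hc : c ≠ 0) :
    (orderOf χ : ℂ) * ∑ x ∈ D, ψ (c * x) =
      ∑ t ∈ range (orderOf χ), (χ ^ t)⁻¹ c * gaussSum (χ ^ t) ψ := by
  classical
  calc (orderOf χ : ℂ) * ∑ x ∈ D, ψ (c * x)
      = ∑ x, (∑ t ∈ range (orderOf χ), (χ ^ t) x) * ψ (c * x) := by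
        simp [χ.sum_range_pow_apply_eq_ite hD, ite_mul, sum_ite_mem, mul_sum]
    _ = ∑ t ∈ range (orderOf χ), gaussSum (χ ^ t) (ψ.mulShift c) := by
        simp_rw [sum_mul, gaussSum, AddChar.mulShift_apply]
        exact sum_comm
    _ = _ := sum_congr rfl fun t _ => by
        simpa using gaussSum_mulShift_eq (χ ^ t) ψ (Units.mk0 c hc)

noncomputable def gaussConv (χ : MulChar F ℂ) (ψ : AddChar F ℂ) (s : ℕ) : ℂ :=
  ∑ t ∈ range (orderOf χ),
    (χ ^ t) (-1) * gaussSum (χ ^ t) ψ * gaussSum (χ ^ ((s : ℤ) - (t : ℤ))) ψ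

theorem sq_mul_sum_mul_sum_neg_eq (χ : MulChar F ℂ) (ψ : AddChar F ℂ) {D : Finset F}
    (hD : (D : Set F) = Hset F (orderOf χ)) {c : F} (hc : c ≠ 0) :
    (orderOf χ : ℂ) ^ 2 * ((∑ x ∈ D, ψ (c * x)) * ∑ x ∈ D, ψ (-c * x)) =
      ∑ u ∈ range (orderOf χ), (χ ^ u)⁻¹ c * gaussConv χ ψ u := by
  set n := orderOf χ
  have hS := orderOf_mul_sum_eq_sum_gaussSum χ ψ hD hc
  have hS' := orderOf_mul_sum_eq_sum_gaussSum χ ψ hD (neg_ne_zero.mpr hc)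
  simp_rw [MulChar.inv_apply_neg] at hS'
  have shift (r : ℕ) : ∑ t ∈ range n, (χ ^ r)⁻¹ c * (χ ^ t)⁻¹ c * gaussSum (χ ^ t) ψ =
      ∑ u ∈ range n, (χ ^ u)⁻¹ c * gaussSum (χ ^ ((u : ℤ) - (r : ℤ))) ψ := by
    simp_rw [zpow_sub, zpow_natCast]
    convert sum_range_orderOf_mul_pow χ r (fun ξ => ξ⁻¹ c * gaussSum (ξ * (χ ^ r)⁻¹) ψ)
      using 2 with t
    rw [mul_inv, MulChar.mul_apply, mul_inv_cancel_comm]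
  calc (n : ℂ) ^ 2 * ((∑ x ∈ D, ψ (c * x)) * ∑ x ∈ D, ψ (-c * x))
      = (n * ∑ x ∈ D, ψ (-c * x)) * (n * ∑ x ∈ D, ψ (c * x)) := by ring
    _ = ∑ r ∈ range n, (χ ^ r) (-1) * gaussSum (χ ^ r) ψ *
          ∑ t ∈ range n, (χ ^ r)⁻¹ c * (χ ^ t)⁻¹ c * gaussSum (χ ^ t) ψ := by
        rw [hS, hS', sum_mul_sum]
        refine sum_congr rfl fun r _ => ?_
        rw [mul_sum]
        exact sum_congr rfl fun t _ => by ring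
    _ = ∑ u ∈ range n, (χ ^ u)⁻¹ c * gaussConv χ ψ u := by
        simp_rw [shift, gaussConv, mul_sum]
        rw [sum_comm]
        exact sum_congr rfl fun u _ => sum_congr rfl fun r _ => by ring

theorem MulChar.exists_forall_sum_inv_pow_mul_eq_iff (χ : MulChar F ℂ) (C : ℕ → ℂ) :
    (∃ K, ∀ c ≠ 0, ∑ u ∈ range (orderOf χ), (χ ^ u)⁻¹ c * C u = K) ↔
      ∀ u, 1 ≤ u → u ≤ orderOf χ - 1 → C u = 0 := by
  classical
  constructor
  · rintro ⟨K, hK⟩ s hs hs'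
    have hsn : s < orderOf χ := by omega
    have horth (u : ℕ) (hu : u < orderOf χ) :
        ∑ c, (χ ^ s) c * ((χ ^ u)⁻¹ c * C u) = if s = u then Fintype.card Fˣ * C u else 0 := by
      simp_rw [← mul_assoc, ← MulChar.mul_apply, ← sum_mul]
      split_ifs with h
      · rw [h, mul_inv_cancel, MulChar.sum_one_eq_card_units]
      · rw [MulChar.sum_eq_zero_of_ne_one, zero_mul]
        rw [Ne, mul_inv_eq_one]
        exact fun h' => h (pow_injOn_Iio_orderOf hsn hu h')
    have hsum : ∑ c, (χ ^ s) c * ∑ u ∈ range (orderOf χ), (χ ^ u)⁻¹ c * C u = 0 := by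
      calc _ = ∑ c, (χ ^ s) c * K := sum_congr rfl fun c _ => by
              rcases eq_or_ne c 0 with rfl | hc
              · simp
              · rw [hK c hc]
        _ = 0 := by rw [← sum_mul, MulChar.sum_eq_zero_of_ne_one
              (pow_ne_one_of_lt_orderOf (by omega) hsn), zero_mul]
    simp_rw [mul_sum] at hsum
    rw [sum_comm, sum_congr rfl fun u hu => horth u (mem_range.mp hu), sum_ite_eq,
      if_pos (mem_range.mpr hsn)] at hsum
    exact (mul_eq_zero.mp hsum).resolve_left (Nat.cast_ne_zero.mpr Fintype.card_ne_zero)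
  · intro h
    refine ⟨C 0, fun c hc => ?_⟩
    rw [sum_eq_single_of_mem 0 (mem_range.mpr χ.orderOf_pos), pow_zero, inv_one,
      MulChar.one_apply hc.isUnit, one_mul]
    intro u hu hu0
    rw [h u (Nat.pos_of_ne_zero hu0) (by have := mem_range.mp hu; omega), mul_zero]

theorem gaussConv_eq_sub (χ : MulChar F ℂ) {ψ : AddChar F ℂ} (hψ : ψ ≠ 1) {s : ℕ}
    (hs : 1 ≤ s) (hsn : s ≤ orderOf χ - 1) :
    gaussConv χ ψ s =
      ∑ t ∈ (Icc 1 (orderOf χ - 1)).erase s,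
          (χ ^ t) (-1) * gaussSum (χ ^ t) ψ * gaussSum (χ ^ ((s : ℤ) - (t : ℤ))) ψ -
        (1 + (χ ^ s) (-1)) * gaussSum (χ ^ s) ψ := by
  have hrange : range (orderOf χ) = insert 0 (insert s ((Icc 1 (orderOf χ - 1)).erase s)) := by
    ext t
    simp only [mem_range, mem_insert, mem_erase, mem_Icc]
    omega
  rw [gaussConv, hrange, sum_insert (by simp; omega), sum_insert (by simp)]
  simp [gaussSum_one_left hψ, MulChar.one_apply isUnit_one.neg]
  ring

theorem exists_forall_sum_mul_sum_neg_eq_iff (χ : MulChar F ℂ) (ψ : AddChar F ℂ) {D : Finset F}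
    (hD : (D : Set F) = Hset F (orderOf χ)) :
    (∃ K : ℂ, ∀ c ≠ 0, (∑ x ∈ D, ψ (c * x)) * ∑ x ∈ D, ψ (-c * x) = K) ↔
      ∀ u, 1 ≤ u → u ≤ orderOf χ - 1 → gaussConv χ ψ u = 0 := by
  have hn : (orderOf χ : ℂ) ^ 2 ≠ 0 := pow_ne_zero 2 (Nat.cast_ne_zero.mpr χ.orderOf_pos.ne')
  rw [← χ.exists_forall_sum_inv_pow_mul_eq_iff]
  constructor <;> rintro ⟨K, hK⟩
  · exact ⟨_ * K, fun c hc => by rw [← sq_mul_sum_mul_sum_neg_eq χ ψ hD hc, hK c hc]⟩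
  · refine ⟨K / (orderOf χ : ℂ) ^ 2, fun c hc => ?_⟩
    rw [← hK c hc, ← sq_mul_sum_mul_sum_neg_eq χ ψ hD hc, mul_div_cancel_left₀ _ hn]

theorem isDiffSet_hset_iff_exists_const {ψ : AddChar F ℂ} (hψ : ψ.IsPrimitive)
    (χ : MulChar F ℂ) {D : Finset F} (hD : (D : Set F) = Hset F (orderOf χ)) {f l : ℕ}
    (hcard : Fintype.card F = orderOf χ * f + 1) (hlf : f - 1 = l * orderOf χ) :
    IsDiffSet (Hset F (orderOf χ)) f l ↔
      ∃ K : ℂ, ∀ c ≠ 0, (∑ x ∈ D, ψ (c * x)) * ∑ x ∈ D, ψ (-c * x) = K := by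
  classical
  have hcardD : #D = f := by
    have := χ.orderOf_mul_card_eq hD
    rw [hcard, Nat.add_sub_cancel] at this
    exact Nat.eq_of_mul_eq_mul_left χ.orderOf_pos this
  have hkl : #D * #D + l = #D + l * Fintype.card F := by
    rw [hcardD, hcard]
    rcases Nat.eq_zero_or_pos f with rfl | hf
    · ring
    · rw [show f = l * orderOf χ + 1 by omega]
      ring
  rw [← hD, isDiffSet_coe_iff, and_iff_right hcardD, forall_diffCount_eq_iff_exists_const hψ D hkl]

end MulChar

theorem stmt2_general (p m f l : ℕ) (hp : p.Prime)
    (F : Type*) [Field F] [Fintype F] [Algebra (ZMod p) F]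
    (hcard : Fintype.card F = m * f + 1)
    (hlf : f - 1 = l * m)
    (χ : MulChar F ℂ) (hχ : orderOf χ = m) :
    IsDiffSet (Hset F m) f l ↔
      ∀ s : ℕ, 1 ≤ s → s ≤ m - 1 →
        ∑ t ∈ (Finset.Icc 1 (m - 1)).erase s,
            (χ ^ t) (-1) * Gsum p F (χ ^ t) * Gsum p F (χ ^ ((s : ℤ) - (t : ℤ)))
          = (1 + (χ ^ s) (-1)) * Gsum p F (χ ^ s) := by
  have := Fact.mk hp
  subst hχ
  have hψ := isPrimitive_traceAddChar p F
  obtain ⟨H, hH⟩ : ∃ H : Finset F, (H : Set F) = Hset F (orderOf χ) :=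
    ⟨_, (Set.toFinite _).coe_toFinset⟩
  rw [isDiffSet_hset_iff_exists_const hψ χ hH hcard hlf,
    exists_forall_sum_mul_sum_neg_eq_iff χ _ hH]
  simp only [Gsum_eq_gaussSum]
  refine forall₃_congr fun s hs hsn => ?_
  rw [gaussConv_eq_sub χ (by simpa using hψ one_ne_zero) hs hsn, sub_eq_zero]

theorem stmt2 (p m f l : ℕ) (hp : p.Prime) (hm : 0 < m) (hf : 0 < f)
    (F : Type*) [Field F] [Fintype F] [Algebra (ZMod p) F]
    (hq : ∃ n : ℕ, 0 < n ∧ Fintype.card F = p ^ n)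
    (hcard : Fintype.card F = m * f + 1)
    (hlf : f - 1 = l * m)
    (χ : MulChar F ℂ) (hχ : orderOf χ = m) :
    IsDiffSet (Hset F m) f l ↔
      ∀ s : ℕ, 1 ≤ s → s ≤ m - 1 →
        ∑ t ∈ (Finset.Icc 1 (m - 1)).erase s,
            (χ ^ t) (-1) * Gsum p F (χ ^ t) * Gsum p F (χ ^ ((s : ℤ) - (t : ℤ)))
          = (1 + (χ ^ s) (-1)) * Gsum p F (χ ^ s) :=
  stmt2_general p m f l hp F hcard hlf χ hχ
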